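/- arXiv:2004.06920 — 4 statements merged into one kernel-verified Lean document; each statement's English description precedes it below -/
import Mathlib

section
/- If A is a finite dimensional nilpotent associative algebra over a field k, then the Frattini subalgebra of A (the intersection of all maximal subalgebras) equals A². -/
/-- `iterMul a n` is the product `a 0 * a 1 * ⋯ * a n` of `n + 1` elements. -/
def iterMul {A : Type*} [NonUnitalRing A] (a : ℕ → A) : ℕ → A
  | 0 => a 0
  | n + 1 => iterMul a n * a (n + 1)

lemma iterMul_congr {A : Type*} [NonUnitalRing A] {a b : ℕ → A} :
    ∀ n, (∀ i ≤ n, a i = b i) → iterMul a n = iterMul b n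
  | 0, h => h 0 (le_refl 0)
  | n + 1, h => by
      rw [iterMul, iterMul, iterMul_congr n (fun i hi => h i (hi.trans (Nat.le_succ n))),
        h (n+1) le_rfl]

lemma iterMul_shift {A : Type*} [NonUnitalRing A] (y : A) (a : ℕ → A) :
    ∀ n, iterMul (fun i => if i = 0 then y else a (i - 1)) (n + 1) = y * iterMul a n
  | 0 => by simp [iterMul]
  | n + 1 => by
      rw [iterMul, iterMul_shift y a n, iterMul]
      simp [mul_assoc]

section PSpan

variable (k : Type*) (A : Type*) [Field k] [NonUnitalRing A] [Module k A]
  [SMulCommClass k A A] [IsScalarTower k A A]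

/-- The span of all (left-nested) products of `n + 1` elements of `A`. -/
def pSpan (n : ℕ) : Submodule k A :=
  Submodule.span k (Set.range fun a : ℕ → A => iterMul a n)

variable {k A}

lemma mem_pSpan_of_iterMul (a : ℕ → A) (n : ℕ) : iterMul a n ∈ pSpan k A n :=
  Submodule.subset_span ⟨a, rfl⟩

lemma pSpan_mul_right {x : A} {n : ℕ} (hx : x ∈ pSpan k A n) (y : A) :
    x * y ∈ pSpan k A (n + 1) := by
  induction hx using Submodule.span_induction with
  | mem z hz =>
      obtain ⟨a, rfl⟩ := hz
      have : iterMul a n * y = iterMul (Function.update a (n + 1) y) (n + 1) := by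
        rw [iterMul]
        congr 1
        · exact iterMul_congr n fun i hi => by
            rw [Function.update_of_ne (by omega)]
        · rw [Function.update_self]
      rw [this]
      exact mem_pSpan_of_iterMul _ _
  | zero => simp only [zero_mul]; exact zero_mem _
  | add u v _ _ hu hv => rw [add_mul]; exact add_mem hu hv
  | smul c u _ hu => rw [smul_mul_assoc]; exact Submodule.smul_mem _ c hu

lemma pSpan_mul_left {x : A} {n : ℕ} (hx : x ∈ pSpan k A n) (y : A) :
    y * x ∈ pSpan k A (n + 1) := by
  induction hx using Submodule.span_induction with
  | mem z hz =>
      obtain ⟨a, rfl⟩ := hz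
      rw [← iterMul_shift y a n]
      exact mem_pSpan_of_iterMul _ _
  | zero => simp only [mul_zero]; exact zero_mem _
  | add u v _ _ hu hv => rw [mul_add]; exact add_mem hu hv
  | smul c u _ hu => rw [mul_smul_comm]; exact Submodule.smul_mem _ c hu

end PSpan

/-- For a finite dimensional nilpotent algebra `A` over a field `k`, the Frattini subalgebra
(the intersection of all maximal subalgebras) equals `A²`, the `k`-span of products `a * b`. -/
theorem stmt3 (k A : Type*) [Field k] [NonUnitalRing A]
    [Module k A] [SMulCommClass k A A] [IsScalarTower k A A] [FiniteDimensional k A]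
    (hnil : ∃ m : ℕ, ∀ a : ℕ → A, iterMul a m = 0) :
    ((sInf {B : NonUnitalSubalgebra k A | IsCoatom B} : NonUnitalSubalgebra k A) : Set A) =
      (Submodule.span k {x : A | ∃ a b : A, x = a * b} : Set A) := by
  obtain ⟨m, hm⟩ := hnil
  set S : Submodule k A := Submodule.span k {x : A | ∃ a b : A, x = a * b} with hSdef
  have hmulS : ∀ a b : A, a * b ∈ S := fun a b => Submodule.subset_span ⟨a, b, rfl⟩
  -- S = pSpan 1
  have hS1 : S = pSpan k A 1 := by
    apply le_antisymm
    · rw [hSdef, Submodule.span_le]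
      rintro _ ⟨a, b, rfl⟩
      have : a * b = iterMul (fun i => if i = 0 then a else b) 1 := by
        simp [iterMul]
      rw [this]
      exact mem_pSpan_of_iterMul _ _
    · rw [pSpan, Submodule.span_le]
      rintro _ ⟨a, rfl⟩
      exact hmulS _ _
  -- pSpan (m+1) = ⊥
  have hPbot : pSpan k A (m + 1) = ⊥ := by
    rw [pSpan, Submodule.span_eq_bot.mpr]
    rintro _ ⟨a, rfl⟩
    show iterMul a (m + 1) = 0
    have : iterMul a (m + 1) = iterMul a m * a (m + 1) := by simp [iterMul]
    rw [this, hm a, zero_mul]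
  apply Set.Subset.antisymm
  · -- Frattini ⊆ S : given x in every coatom, x ∈ S
    intro x hx
    rw [SetLike.mem_coe] at hx ⊢
    by_contra hxS
    -- construct a coatom not containing x
    have hv : Submodule.Quotient.mk (p := S) x ≠ 0 := by
      simpa [Submodule.Quotient.mk_eq_zero] using hxS
    obtain ⟨φ, hφ⟩ : ∃ φ : Module.Dual k (A ⧸ S), φ (Submodule.Quotient.mk x) ≠ 0 := by
      by_contra h
      push_neg at h
      exact hv ((Module.forall_dual_apply_eq_zero_iff k _).mp h)
    set g : A →ₗ[k] k := φ ∘ₗ S.mkQ with hgdef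
    have hgx : g x ≠ 0 := hφ
    have hSW : S ≤ LinearMap.ker g := by
      intro s hs
      simp [hgdef, Submodule.mkQ_apply, (Submodule.Quotient.mk_eq_zero S).mpr hs]
    set B : NonUnitalSubalgebra k A :=
      (LinearMap.ker g).toNonUnitalSubalgebra
        (fun a b _ _ => hSW (hmulS a b)) with hBdef
    have hxB : x ∉ B := by
      simpa [hBdef, Submodule.mem_toNonUnitalSubalgebra, LinearMap.mem_ker] using hgx
    have hB : IsCoatom B := by
      constructor
      · intro h
        exact hxB (h ▸ trivial)
      · intro C hBC
        obtain ⟨z, hzC, hzB⟩ := SetLike.exists_of_lt hBC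
        have hgz : g z ≠ 0 := by
          simpa [hBdef, Submodule.mem_toNonUnitalSubalgebra, LinearMap.mem_ker] using hzB
        rw [eq_top_iff]
        intro y _
        have hyw : y - (g y / g z) • z ∈ B := by
          simp [hBdef, Submodule.mem_toNonUnitalSubalgebra, LinearMap.mem_ker, map_sub,
            map_smul, div_mul_cancel₀ _ hgz, smul_eq_mul]
        have : y = (y - (g y / g z) • z) + (g y / g z) • z := by ring_nf; abel
        rw [this]
        exact add_mem (hBC.le hyw) (SMulMemClass.smul_mem _ hzC)
    have := (NonUnitalAlgebra.mem_sInf.mp hx) B hB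
    exact hxB this
  · -- S ⊆ Frattini : every coatom contains S
    intro x hx
    rw [SetLike.mem_coe] at hx ⊢
    rw [NonUnitalAlgebra.mem_sInf]
    intro B hB
    by_contra hxB
    -- B ⊔ S (as submodule) is a subalgebra properly containing B, hence is ⊤
    set M : Submodule k A := B.toSubmodule ⊔ S with hMdef
    set C : NonUnitalSubalgebra k A :=
      M.toNonUnitalSubalgebra (fun a b _ _ => Submodule.mem_sup_right (hmulS a b)) with hCdef
    have hBC : B < C := by
      refine lt_of_le_of_ne (fun y hy => ?_) (fun h => ?_)
      · exact Submodule.mem_sup_left (show y ∈ B.toSubmodule from hy)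
      · apply hxB
        have hxC : x ∈ C := Submodule.mem_sup_right hx
        rw [← h] at hxC
        exact hxC
    have hCtop : C = ⊤ := hB.2 C hBC
    have htop : ∀ y : A, y ∈ M := by
      intro y
      have : y ∈ C := hCtop ▸ trivial
      exact this
    -- key induction : A = B + pSpan (n+1) for all n
    have key : ∀ n : ℕ, ∀ y : A, y ∈ B.toSubmodule ⊔ pSpan k A (n + 1) := by
      intro n
      induction n with
      | zero => intro y; rw [← hS1]; exact htop y
      | succ n ih =>
          intro y
          obtain ⟨b, hb, s, hs, rfl⟩ := Submodule.mem_sup.mp (htop y)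
          refine add_mem (Submodule.mem_sup_left hb) ?_
          rw [hS1] at hs
          have hsub : pSpan k A 1 ≤ B.toSubmodule ⊔ pSpan k A (n + 1 + 1) := by
            rw [pSpan, Submodule.span_le]
            rintro _ ⟨a, rfl⟩
            simp only [SetLike.mem_coe]
            have ha1 : iterMul a 1 = a 0 * a 1 := by simp [iterMul]
            rw [ha1]
            obtain ⟨b1, hb1, p1, hp1, h1⟩ := Submodule.mem_sup.mp (ih (a 0))
            obtain ⟨b2, hb2, p2, hp2, h2⟩ := Submodule.mem_sup.mp (ih (a 1))
            have : a 0 * a 1 = b1 * b2 + (b1 * p2 + p1 * a 1) := by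
              rw [← h1, ← h2, add_mul, mul_add, add_assoc]
            rw [this]
            refine add_mem (Submodule.mem_sup_left (B.mul_mem hb1 hb2)) (Submodule.mem_sup_right ?_)
            exact add_mem (pSpan_mul_left hp2 b1) (pSpan_mul_right hp1 (a 1))
          exact hsub hs
    have := key m x
    rw [hPbot, sup_bot_eq] at this
    exact hxB this
end

section
/- For a finite dimensional associative algebra A over a field k and a two-sided ideal I of A, the length of A equals the length of I plus the length of A/I: l(A) = l(I) + l(A/I). -/
def IsUnrefinableChain (k : Type*) (A : Type*) [Field k] [NonUnitalRing A]
    [Module k A] [SMulCommClass k A A] [IsScalarTower k A A] (t : ℕ) : Prop :=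
  ∃ f : ℕ → NonUnitalSubalgebra k A, f 0 = ⊥ ∧ f t = ⊤ ∧ ∀ i < t, f i ⋖ f (i + 1)

/-- The length of a finite dimensional algebra: the supremum of the lengths of
unrefinable chains of subalgebras. -/
noncomputable def algLength (k : Type*) (A : Type*) [Field k] [NonUnitalRing A]
    [Module k A] [SMulCommClass k A A] [IsScalarTower k A A] : ℕ :=
  sSup {t | IsUnrefinableChain k A t}

/-!
Concatenating longest chains of subalgebras from `0` to `I` and from `I` to `A` gives
`l(A) ≥ l(I) + l(A/I)`. Conversely, along an unrefinable chain `0 = B₀ ⋖ ⋯ ⋖ Bₜ = B` one shows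
`t ≤ l(0, B ⊓ I) + l(B ⊓ I, B)` by induction. At a step `M ⋖ B`, either `B ⊓ I ≤ M`, and the step
lengthens the upper part, or `M ⊓ I < B ⊓ I`, which lengthens the lower part; then
`M ⊔ (B ⊓ I) = B`, and since `B ⊓ I` is an ideal of `B` the interval `[M ⊓ I, M]` is isomorphic to
`[B ⊓ I, B]` (second isomorphism theorem), so the upper part does not shrink. Finally, subalgebras
of `I` and of `A/I` are the intervals `[0, I]` and `[I, A]` of subalgebras of `A`.
-/

inductive CovByChain {α : Type*} [PartialOrder α] (a : α) : α → ℕ → Prop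
  | refl : CovByChain a a 0
  | snoc {b c : α} {t : ℕ} : CovByChain a b t → b ⋖ c → CovByChain a c (t + 1)

namespace CovByChain

variable {α : Type*} [PartialOrder α] {a b c : α} {s t : ℕ}

theorem le (h : CovByChain a b t) : a ≤ b := by
  induction h with
  | refl => exact le_rfl
  | snoc _ hbc ih => exact ih.trans hbc.le

theorem eq_of_length_eq_zero (h : CovByChain a b 0) : a = b := by
  cases h
  rfl

theorem trans (hab : CovByChain a b s) (hbc : CovByChain b c t) : CovByChain a c (s + t) := by
  induction hbc with
  | refl => exact hab
  | snoc _ hcd ih => exact ih.snoc hcd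

theorem _root_.CovBy.covByChain (h : a ⋖ b) : CovByChain a b 1 :=
  refl.snoc h

theorem _root_.covByChain_iff_exists_fun :
    CovByChain a b t ↔ ∃ f : ℕ → α, f 0 = a ∧ f t = b ∧ ∀ i < t, f i ⋖ f (i + 1) := by
  constructor
  · intro h
    induction h with
    | refl => exact ⟨fun _ => a, rfl, rfl, by omega⟩
    | @snoc b c t _ hbc ih =>
      obtain ⟨f, hf0, hft, hf⟩ := ih
      refine ⟨Function.update f (t + 1) c, by simp [hf0], by simp, fun i hi => ?_⟩
      rcases Nat.lt_succ_iff_lt_or_eq.mp hi with hi | rfl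
      · simpa [Function.update_of_ne (show i ≠ t + 1 by omega),
          Function.update_of_ne (show i + 1 ≠ t + 1 by omega)] using hf i hi
      · simpa [hft] using hbc
  · rintro ⟨f, rfl, rfl, hf⟩
    suffices ∀ i ≤ t, CovByChain (f 0) (f i) i from this t le_rfl
    intro i hi
    induction i with
    | zero => exact refl
    | succ i ih => exact (ih (by omega)).snoc (hf i (by omega))

theorem rank_add_le {r : α → ℕ} (hr : StrictMono r) (h : CovByChain a b t) : r a + t ≤ r b := by
  induction h with
  | refl => simp
  | snoc _ hbc ih => have := hr hbc.lt; omega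

end CovByChain

theorem covByChain_apply_iff {α β : Type*} [PartialOrder α] [PartialOrder β] (f : β ↪o α)
    (hf : (Set.range f).OrdConnected) {a b : β} {t : ℕ} :
    CovByChain (f a) (f b) t ↔ CovByChain a b t := by
  refine ⟨fun h => ?_, fun h => ?_⟩
  swap
  · induction h with
    | refl => exact .refl
    | snoc _ hbc ih => exact ih.snoc (hbc.image f hf)
  generalize hc : f b = c at h
  induction h generalizing b with
  | refl => rw [f.injective hc]; exact .refl
  | snoc hac hcd ih =>
    subst hc
    obtain ⟨c, rfl⟩ := hf.out ⟨a, rfl⟩ ⟨b, rfl⟩ ⟨hac.le, hcd.le⟩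
    exact (ih rfl).snoc ((hf.apply_covBy_apply_iff f).mp hcd)

/-- Junk value `0` when there is no chain from `a` to `b` or their lengths are unbounded. -/
noncomputable def chainLength {α : Type*} [PartialOrder α] (a b : α) : ℕ :=
  sSup {t | CovByChain a b t}

section Rank

variable {α : Type*} [PartialOrder α] {r : α → ℕ} {a b c : α} {t : ℕ}

theorem exists_covByChain (hr : StrictMono r) (hab : a ≤ b) : ∃ t, CovByChain a b t := by
  have := hr.wellFoundedLT
  induction hn : r b - r a using Nat.strong_induction_on generalizing a with
  | _ n ih =>
    rcases hab.eq_or_lt with rfl | hlt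
    · exact ⟨0, .refl⟩
    obtain ⟨c, hac, hcb⟩ := exists_covBy_le_of_lt hlt
    have hn' : r b - r c < n := by have := hr hac.lt; have := hr.monotone hcb; omega
    obtain ⟨t, hcb'⟩ := ih _ hn' hcb rfl
    exact ⟨1 + t, hac.covByChain.trans hcb'⟩

theorem bddAbove_covByChain (hr : StrictMono r) (a b : α) : BddAbove {t | CovByChain a b t} :=
  ⟨r b, fun _ h => by have := h.rank_add_le hr; omega⟩

theorem CovByChain.le_chainLength (hr : StrictMono r) (h : CovByChain a b t) :
    t ≤ chainLength a b :=
  le_csSup (bddAbove_covByChain hr a b) h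

theorem covByChain_chainLength (hr : StrictMono r) (hab : a ≤ b) :
    CovByChain a b (chainLength a b) :=
  Nat.sSup_mem (exists_covByChain hr hab) (bddAbove_covByChain hr a b)

theorem chainLength_add_chainLength_le (hr : StrictMono r) (hab : a ≤ b) (hbc : b ≤ c) :
    chainLength a b + chainLength b c ≤ chainLength a c :=
  ((covByChain_chainLength hr hab).trans (covByChain_chainLength hr hbc)).le_chainLength hr

theorem chainLength_add_one_le (hr : StrictMono r) (hab : a ≤ b) (hbc : b < c) :
    chainLength a b + 1 ≤ chainLength a c := by
  obtain ⟨t, hbc'⟩ := exists_covByChain hr hbc.le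
  have ht : t ≠ 0 := by rintro rfl; exact hbc.ne hbc'.eq_of_length_eq_zero
  have := ((covByChain_chainLength hr hab).trans hbc').le_chainLength hr
  omega

end Rank

theorem covByChain_subtype_iff {α : Type*} [PartialOrder α] {s : Set α} [s.OrdConnected]
    {a b : s} {t : ℕ} : CovByChain (a : α) b t ↔ CovByChain a b t :=
  covByChain_apply_iff (OrderEmbedding.subtype (· ∈ s)) <| by
    rwa [OrderEmbedding.coe_subtype, Subtype.range_val]

/-- The diamond isomorphism `[a ⊓ b, a] ≃o [b, a ⊔ b]`, from the two instances of the modular law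
that make `x ↦ x ⊔ b` and `y ↦ y ⊓ a` mutually inverse. -/
theorem chainLength_inf_eq_chainLength_sup {α : Type*} [Lattice α] {a b : α}
    (hsup_inf : ∀ x, a ⊓ b ≤ x → x ≤ a → (x ⊔ b) ⊓ a = x)
    (hinf_sup : ∀ y, b ≤ y → y ≤ a ⊔ b → y ⊓ a ⊔ b = y) :
    chainLength (a ⊓ b) a = chainLength b (a ⊔ b) := by
  let f : Set.Icc (a ⊓ b) a ↪o α := OrderEmbedding.ofMapLEIff (fun x => x.1 ⊔ b) fun x y =>
    ⟨fun h => by simpa [hsup_inf x x.2.1 x.2.2, hsup_inf y y.2.1 y.2.2] using inf_le_inf_right a h,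
      fun h => sup_le_sup_right (show (x : α) ≤ y from h) b⟩
  have hrange : Set.range f = Set.Icc b (a ⊔ b) := by
    ext y
    constructor
    · rintro ⟨x, rfl⟩
      exact ⟨le_sup_right, sup_le_sup_right x.2.2 b⟩
    · rintro ⟨hby, hya⟩
      exact ⟨⟨y ⊓ a, le_inf (inf_le_right.trans hby) inf_le_left, inf_le_right⟩, hinf_sup y hby hya⟩
  let bot : Set.Icc (a ⊓ b) a := ⟨a ⊓ b, le_rfl, inf_le_left⟩
  let top : Set.Icc (a ⊓ b) a := ⟨a, inf_le_left, le_rfl⟩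
  have hf : f bot = b := by simp [f, bot]
  have hf' : f top = a ⊔ b := rfl
  refine congrArg sSup (Set.ext fun t => ?_)
  change CovByChain (bot : α) top t ↔ CovByChain b (a ⊔ b) t
  rw [covByChain_subtype_iff, ← covByChain_apply_iff f (hrange ▸ Set.ordConnected_Icc), hf, hf']

namespace NonUnitalSubalgebra

section CommRing

variable {R A : Type*} [CommRing R] [NonUnitalRing A] [Module R A]
  [SMulCommClass R A A] [IsScalarTower R A A]

theorem toSubmodule_sup_of_mul_mem {X N : NonUnitalSubalgebra R A}
    (hN : ∀ x ∈ X, ∀ n ∈ N, x * n ∈ N ∧ n * x ∈ N) :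
    (X ⊔ N).toSubmodule = X.toSubmodule ⊔ N.toSubmodule := by
  set P := X.toSubmodule ⊔ N.toSubmodule
  have hmul : ∀ a b, a ∈ P → b ∈ P → a * b ∈ P := by
    intro a b ha hb
    obtain ⟨x, hx, n, hn, rfl⟩ := Submodule.mem_sup.mp ha
    obtain ⟨x', hx', n', hn', rfl⟩ := Submodule.mem_sup.mp hb
    have hexpand : (x + n) * (x' + n') = x * x' + (x * n' + n * x' + n * n') := by noncomm_ring
    rw [hexpand]
    have hxx' : x * x' ∈ X := mul_mem hx hx'
    have hnn' : n * n' ∈ N := mul_mem hn hn'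
    exact Submodule.add_mem_sup hxx'
      (add_mem (add_mem (hN x hx n' hn').1 (hN x' hx' n hn).2) hnn')
  have hle : X ⊔ N ≤ P.toNonUnitalSubalgebra hmul :=
    sup_le (fun x hx => Submodule.mem_sup_left hx) (fun n hn => Submodule.mem_sup_right hn)
  exact le_antisymm (fun z hz => hle hz)
    (sup_le (fun x hx => le_sup_left (b := N) hx) (fun n hn => le_sup_right (a := X) hn))

/-- Second isomorphism theorem: when `M` normalizes `N`, sups with `N` below `M` are sums of
submodules, so the modular law of submodules gives the diamond isomorphism. -/
theorem chainLength_inf_eq {M N : NonUnitalSubalgebra R A}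
    (hN : ∀ x ∈ M, ∀ n ∈ N, x * n ∈ N ∧ n * x ∈ N) :
    chainLength (M ⊓ N) M = chainLength N (M ⊔ N) := by
  have hsup : ∀ {X}, X ≤ M → (X ⊔ N).toSubmodule = X.toSubmodule ⊔ N.toSubmodule :=
    fun hXM => toSubmodule_sup_of_mul_mem fun x hx => hN x (hXM hx)
  have hmono : Monotone (toSubmodule : NonUnitalSubalgebra R A → Submodule R A) :=
    toSubmodule'.monotone
  refine chainLength_inf_eq_chainLength_sup (fun x hx hxM => ?_) (fun y hNy hy => ?_)
  · apply toSubmodule_injective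
    rw [NonUnitalAlgebra.inf_toSubmodule, hsup hxM, sup_inf_assoc_of_le _ (hmono hxM),
      sup_eq_left.mpr (by rw [inf_comm, ← NonUnitalAlgebra.inf_toSubmodule]; exact hmono hx)]
  · apply toSubmodule_injective
    rw [hsup inf_le_right, NonUnitalAlgebra.inf_toSubmodule, sup_comm, inf_comm,
      ← sup_inf_assoc_of_le _ (hmono hNy), sup_comm, ← hsup le_rfl,
      inf_eq_right.mpr (hmono hy)]

theorem chainLength_bot_top_of_subalgebra (S : NonUnitalSubalgebra R A) :
    chainLength (⊥ : NonUnitalSubalgebra R S) ⊤ = chainLength ⊥ S := by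
  let ι := NonUnitalSubalgebraClass.subtype S
  let f : NonUnitalSubalgebra R S ↪o NonUnitalSubalgebra R A :=
    OrderEmbedding.ofMapLEIff (map ι) fun X Y => ⟨fun h x hx => by
      obtain ⟨y, hy, hyx⟩ := mem_map.mp (h (mem_map.mpr ⟨x, hx, rfl⟩))
      exact Subtype.val_injective hyx ▸ hy, fun h => map_mono h⟩
  have hrange : Set.range f = Set.Iic S := by
    ext Y
    constructor
    · rintro ⟨X, rfl⟩
      exact map_le.mpr fun x _ => x.2
    · intro hY
      refine ⟨comap ι Y, show map ι (comap ι Y) = Y from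
        NonUnitalSubalgebra.ext fun z => ⟨?_, fun hz => ⟨⟨z, hY hz⟩, hz, rfl⟩⟩⟩
      rintro ⟨x, hx, rfl⟩
      exact hx
  have hbot : f ⊥ = ⊥ := NonUnitalAlgebra.map_bot ι
  have htop : f ⊤ = S := by simp [f, ι, range_val]
  refine congrArg sSup (Set.ext fun t => ?_)
  change CovByChain _ _ t ↔ CovByChain _ _ t
  rw [← covByChain_apply_iff f (hrange ▸ Set.ordConnected_Iic), hbot, htop]

theorem chainLength_bot_top_of_surjective {Q : Type*} [NonUnitalRing Q] [Module R Q]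
    [SMulCommClass R Q Q] [IsScalarTower R Q Q] {I : NonUnitalSubalgebra R A} {π : A →ₙₐ[R] Q}
    (hsurj : Function.Surjective π) (hker : ∀ x : A, π x = 0 ↔ x ∈ I) :
    chainLength (⊥ : NonUnitalSubalgebra R Q) ⊤ = chainLength I ⊤ := by
  let f : NonUnitalSubalgebra R Q ↪o NonUnitalSubalgebra R A :=
    OrderEmbedding.ofMapLEIff (comap π) fun X Y => ⟨fun h q hq => by
      obtain ⟨a, rfl⟩ := hsurj q
      exact h hq, fun h _ ha => h ha⟩
  have hbot : f ⊥ = I := SetLike.ext fun a => (NonUnitalAlgebra.mem_bot).trans (hker a)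
  have hrange : Set.range f = Set.Ici I := by
    ext Y
    constructor
    · rintro ⟨X, rfl⟩
      exact hbot ▸ f.monotone bot_le
    · intro hY
      refine ⟨map π Y, show comap π (map π Y) = Y from
        NonUnitalSubalgebra.ext fun a => ⟨?_, fun ha => ⟨a, ha, rfl⟩⟩⟩
      rintro ⟨b, hb, hba⟩
      have hab : a - b ∈ Y := hY ((hker _).mp (by rw [map_sub]; exact sub_eq_zero.mpr hba.symm))
      simpa using add_mem hb hab
  have htop : f ⊤ = ⊤ := NonUnitalAlgebra.comap_top π
  refine congrArg sSup (Set.ext fun t => ?_)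
  change CovByChain _ _ t ↔ CovByChain _ _ t
  rw [← covByChain_apply_iff f (hrange ▸ Set.ordConnected_Ici), hbot, htop]

end CommRing

section Field

variable {k A : Type*} [Field k] [NonUnitalRing A] [Module k A]

theorem strictMono_finrank_toSubmodule [FiniteDimensional k A] :
    StrictMono fun X : NonUnitalSubalgebra k A => Module.finrank k X.toSubmodule :=
  fun _ _ h => Submodule.finrank_lt_finrank_of_lt (toSubmodule'.strictMono h)

variable [SMulCommClass k A A] [IsScalarTower k A A]

theorem algLength_eq_chainLength : algLength k A = chainLength (⊥ : NonUnitalSubalgebra k A) ⊤ :=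
  congrArg sSup (Set.ext fun _ => covByChain_iff_exists_fun.symm)

variable [FiniteDimensional k A] {I : NonUnitalSubalgebra k A}

theorem le_chainLength_add_of_covByChain (hI : ∀ x : A, ∀ a ∈ I, x * a ∈ I ∧ a * x ∈ I)
    {B : NonUnitalSubalgebra k A} {t : ℕ} (h : CovByChain ⊥ B t) :
    t ≤ chainLength ⊥ (B ⊓ I) + chainLength (B ⊓ I) B := by
  have hr := strictMono_finrank_toSubmodule (k := k) (A := A)
  induction h with
  | refl => exact Nat.zero_le _
  | @snoc M B t _ hMB ih =>
    have hMI : M ⊓ I ≤ B ⊓ I := inf_le_inf_right I hMB.le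
    by_cases hIM : B ⊓ I ≤ M
    · rw [le_antisymm hMI (le_inf hIM inf_le_right)] at ih
      have := chainLength_add_one_le hr hIM hMB.lt
      omega
    · have h1 := chainLength_add_one_le hr bot_le (hMI.lt_of_ne fun h => hIM (h ▸ inf_le_left))
      have hsup : M ⊔ B ⊓ I = B :=
        (hMB.wcovBy.eq_or_eq le_sup_left (sup_le hMB.le inf_le_left)).resolve_left
          fun h => hIM (h ▸ le_sup_right)
      have hinf : M ⊓ (B ⊓ I) = M ⊓ I := by rw [← inf_assoc, inf_eq_left.mpr hMB.le]
      have hnorm : ∀ x ∈ M, ∀ n ∈ B ⊓ I, x * n ∈ B ⊓ I ∧ n * x ∈ B ⊓ I := fun x hx n hn =>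
        ⟨⟨mul_mem (hMB.le hx) hn.1, (hI x n hn.2).1⟩, ⟨mul_mem hn.1 (hMB.le hx), (hI x n hn.2).2⟩⟩
      have h2 : chainLength (M ⊓ I) M = chainLength (B ⊓ I) B := by
        rw [← hinf, chainLength_inf_eq hnorm, hsup]
      omega

theorem chainLength_eq_add_of_ideal (hI : ∀ x : A, ∀ a ∈ I, x * a ∈ I ∧ a * x ∈ I) :
    chainLength (⊥ : NonUnitalSubalgebra k A) ⊤ = chainLength ⊥ I + chainLength I ⊤ := by
  have hr := strictMono_finrank_toSubmodule (k := k) (A := A)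
  refine le_antisymm ?_ (chainLength_add_chainLength_le hr bot_le le_top)
  simpa using le_chainLength_add_of_covByChain hI (covByChain_chainLength hr (bot_le : ⊥ ≤ ⊤))

end Field

end NonUnitalSubalgebra

/-- For a finite dimensional associative algebra `A` over a field `k` and a two-sided ideal
`I` of `A` (with quotient `Q ≅ A/I`, realized by a surjective non-unital algebra
homomorphism `π : A → Q` with kernel `I`), one has `l(A) = l(I) + l(A/I)`. -/
theorem stmt4 (k A Q : Type*) [Field k] [NonUnitalRing A]
    [Module k A] [SMulCommClass k A A] [IsScalarTower k A A] [FiniteDimensional k A]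
    [NonUnitalRing Q] [Module k Q] [SMulCommClass k Q Q] [IsScalarTower k Q Q]
    (I : NonUnitalSubalgebra k A)
    (hIdeal : ∀ x : A, ∀ a ∈ I, x * a ∈ I ∧ a * x ∈ I)
    (π : A →ₙₐ[k] Q) (hsurj : Function.Surjective π)
    (hker : ∀ x : A, π x = 0 ↔ x ∈ I) :
    algLength k A = algLength k I + algLength k Q := by
  open NonUnitalSubalgebra in
  rw [algLength_eq_chainLength, algLength_eq_chainLength, algLength_eq_chainLength,
    chainLength_bot_top_of_subalgebra, chainLength_bot_top_of_surjective hsurj hker,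
    chainLength_eq_add_of_ideal hIdeal]
end

section
/- For a finite dimensional associative algebra A over a field k and a non-trivial two-sided ideal I of A, the depth satisfies λ(A) ≥ λ(A/I) + 1. -/
section Aux

variable {k A : Type*} [Field k] [NonUnitalRing A]
    [Module k A] [SMulCommClass k A A] [IsScalarTower k A A]

/-- In a finite dimensional algebra, any subalgebra can be connected to `⊤` by
an unrefinable chain. -/
lemma exists_chain_to_top [FiniteDimensional k A] :
    ∀ n (B : NonUnitalSubalgebra k A),
      Module.finrank k A - Module.finrank k B.toSubmodule ≤ n →
      ∃ (t : ℕ) (f : ℕ → NonUnitalSubalgebra k A),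
        f 0 = B ∧ f t = ⊤ ∧ ∀ i < t, f i ⋖ f (i + 1) := by
  intro n
  induction n with
  | zero =>
    intro B hB
    have hle : Module.finrank k B.toSubmodule ≤ Module.finrank k A :=
      Submodule.finrank_le _
    have hBtop : B = ⊤ := NonUnitalAlgebra.toSubmodule_eq_top.mp
      (Submodule.eq_top_of_finrank_eq (by omega))
    exact ⟨0, fun _ => B, rfl, hBtop, by omega⟩
  | succ n ih =>
    intro B hB
    by_cases hBt : B = ⊤
    · exact ⟨0, fun _ => B, rfl, hBt, by omega⟩
    · have hBlt : B < ⊤ := lt_top_iff_ne_top.mpr hBt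
      set S : Set ℕ := {d | ∃ D : NonUnitalSubalgebra k A, B < D ∧
        Module.finrank k D.toSubmodule = d} with hS
      have hSne : S.Nonempty := ⟨_, ⊤, hBlt, rfl⟩
      obtain ⟨D, hBD, hD⟩ := Nat.sInf_mem hSne
      have hcov : B ⋖ D := by
        refine ⟨hBD, fun E hBE hED => ?_⟩
        have h1 : Module.finrank k E.toSubmodule < Module.finrank k D.toSubmodule :=
          Submodule.finrank_lt_finrank_of_lt
            (NonUnitalSubalgebra.toSubmodule'.strictMono hED)
        have h2 : sInf S ≤ Module.finrank k E.toSubmodule :=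
          Nat.sInf_le ⟨E, hBE, rfl⟩
        omega
      have hfr : Module.finrank k B.toSubmodule < Module.finrank k D.toSubmodule :=
        Submodule.finrank_lt_finrank_of_lt (NonUnitalSubalgebra.toSubmodule'.strictMono hBD)
      have hDA : Module.finrank k D.toSubmodule ≤ Module.finrank k A :=
        Submodule.finrank_le _
      obtain ⟨t, f, hf0, hft, hfcov⟩ := ih D (by omega)
      refine ⟨t + 1, fun i => if i = 0 then B else f (i - 1), by simp, by simp [hft], ?_⟩
      intro i hi
      rcases Nat.eq_zero_or_pos i with rfl | hipos
      · simpa [hf0] using hcov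
      · have h1 : i ≠ 0 := by omega
        have h2 : i + 1 ≠ 0 := by omega
        simp only [h1, h2, if_false]
        have h3 : i - 1 + 1 = i + 1 - 1 := by omega
        rw [← h3]
        exact hfcov _ (by omega)

/-- Deduplicating a weak chain (each step either equality or a covering) yields an
unrefinable chain; if no step was an equality the length is preserved exactly. -/
lemma dedup {α : Type*} [PartialOrder α] :
    ∀ t (g : ℕ → α), (∀ i < t, g i = g (i + 1) ∨ g i ⋖ g (i + 1)) →
      ∃ (s : ℕ) (f : ℕ → α), f 0 = g 0 ∧ f s = g t ∧ (∀ i < s, f i ⋖ f (i + 1)) ∧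
        s ≤ t ∧ (s = t → ∀ i < t, g i ≠ g (i + 1)) := by
  intro t
  induction t with
  | zero => exact fun g _ => ⟨0, g, rfl, rfl, by omega, le_refl _, fun _ i hi => by omega⟩
  | succ t ih =>
    intro g hg
    obtain ⟨s, f, hf0, hfs, hfcov, hst, hne⟩ := ih g (fun i hi => hg i (by omega))
    rcases hg t (by omega) with heq | hcov
    · exact ⟨s, f, hf0, heq ▸ hfs, hfcov, by omega, fun h => absurd h (by omega)⟩
    · refine ⟨s + 1, fun i => if i ≤ s then f i else g (t + 1), by simp [hf0],
        by simp, ?_, by omega, ?_⟩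
      · intro i hi
        rcases Nat.lt_or_ge i s with h | h
        · have h1 : i ≤ s := by omega
          have h2 : i + 1 ≤ s := by omega
          simpa [h1, h2] using hfcov i h
        · have hieq : i = s := by omega
          subst hieq
          have h2 : ¬ (i + 1 ≤ i) := by omega
          simpa [h2, hfs] using hcov
      · intro h i hi
        rcases Nat.lt_or_ge i t with h' | h'
        · exact hne (by omega) i h'
        · have hit : i = t := by omega
          subst hit
          exact hcov.lt.ne

end Aux

/-- The depth of a finite dimensional algebra: the minimal length of an
unrefinable chain of subalgebras. -/
noncomputable def algDepth (k : Type*) (A : Type*) [Field k] [NonUnitalRing A]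
    [Module k A] [SMulCommClass k A A] [IsScalarTower k A A] : ℕ :=
  sInf {t | IsUnrefinableChain k A t}

/-- For a finite dimensional associative algebra `A` over a field `k` and a non-trivial
two-sided ideal `I` of `A` (with quotient `Q ≅ A/I` realized by a surjective non-unital
algebra homomorphism with kernel `I`), the depth satisfies `λ(A) ≥ λ(A/I) + 1`. -/
theorem stmt5 (k A Q : Type*) [Field k] [NonUnitalRing A]
    [Module k A] [SMulCommClass k A A] [IsScalarTower k A A] [FiniteDimensional k A]
    [NonUnitalRing Q] [Module k Q] [SMulCommClass k Q Q] [IsScalarTower k Q Q]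
    (I : NonUnitalSubalgebra k A)
    (hIdeal : ∀ x : A, ∀ a ∈ I, x * a ∈ I ∧ a * x ∈ I)
    (hbot : I ≠ ⊥) (htop : I ≠ ⊤)
    (π : A →ₙₐ[k] Q) (hsurj : Function.Surjective π)
    (hker : ∀ x : A, π x = 0 ↔ x ∈ I) :
    algDepth k Q + 1 ≤ algDepth k A := by
  classical
  -- the set of chain lengths for A is nonempty
  have hAne : {t | IsUnrefinableChain k A t}.Nonempty := by
    obtain ⟨t, f, hf0, hft, hfcov⟩ := exists_chain_to_top (Module.finrank k A)
      (⊥ : NonUnitalSubalgebra k A) (by omega)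
    exact ⟨t, f, hf0, hft, hfcov⟩
  obtain ⟨f, hf0, hft, hfcov⟩ : IsUnrefinableChain k A (algDepth k A) := Nat.sInf_mem hAne
  set t := algDepth k A with htdef
  have hg0 : (f 0).map π = ⊥ := by
    rw [hf0]; exact NonUnitalAlgebra.map_bot π
  have hgt : (f t).map π = ⊤ := by
    rw [hft, NonUnitalAlgebra.map_top, NonUnitalAlgebra.range_eq_top]
    exact hsurj
  have hmono : ∀ {S T : NonUnitalSubalgebra k A}, S ≤ T → S.map π ≤ T.map π := by
    intro S T h y hy
    obtain ⟨x, hx, rfl⟩ := NonUnitalSubalgebra.mem_map.mp hy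
    exact NonUnitalSubalgebra.mem_map.mpr ⟨x, h hx, rfl⟩
  -- each mapped step is an equality or a covering
  have hstep : ∀ i < t, (f i).map π = (f (i + 1)).map π ∨ (f i).map π ⋖ (f (i + 1)).map π := by
    intro i hi
    by_cases heq : (f i).map π = (f (i + 1)).map π
    · exact Or.inl heq
    refine Or.inr ⟨lt_of_le_of_ne (hmono (hfcov i hi).lt.le) heq, fun B h1 h2 => ?_⟩
    have hC1 : f i ≤ f i ⊔ (B.comap π ⊓ f (i + 1)) := le_sup_left
    have hC2 : f i ⊔ (B.comap π ⊓ f (i + 1)) ≤ f (i + 1) :=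
      sup_le (hfcov i hi).lt.le inf_le_right
    by_cases hCeq : f i ⊔ (B.comap π ⊓ f (i + 1)) = f i
    · -- then B ≤ (f i).map π, contradicting (f i).map π < B
      refine h1.not_ge (fun b hb => ?_)
      have hb' : b ∈ (f (i + 1)).map π := h2.le hb
      obtain ⟨a, ha, rfl⟩ := NonUnitalSubalgebra.mem_map.mp hb'
      have haC : a ∈ f i ⊔ (B.comap π ⊓ f (i + 1)) :=
        SetLike.le_def.mp le_sup_right
          (show a ∈ B.comap π ⊓ f (i + 1) from
            ⟨(NonUnitalSubalgebra.mem_comap _ _ _).mpr hb, ha⟩)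
      rw [hCeq] at haC
      exact NonUnitalSubalgebra.mem_map.mpr ⟨a, haC, rfl⟩
    · have hClt : f i < f i ⊔ (B.comap π ⊓ f (i + 1)) := lt_of_le_of_ne hC1 (Ne.symm hCeq)
      have hCtop : f i ⊔ (B.comap π ⊓ f (i + 1)) = f (i + 1) := by
        by_contra hne
        exact (hfcov i hi).2 hClt (lt_of_le_of_ne hC2 hne)
      -- then (f (i+1)).map π ≤ B, contradicting B < (f (i+1)).map π
      refine h2.not_ge ?_
      conv_lhs => rw [← hCtop]
      rw [NonUnitalAlgebra.map_sup]
      refine sup_le h1.le ?_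
      intro y hy
      obtain ⟨x, hx, rfl⟩ := NonUnitalSubalgebra.mem_map.mp hy
      exact (NonUnitalSubalgebra.mem_comap _ _ _).mp hx.1
  -- there is at least one collapsed step
  have hcollapse : ∃ i < t, (f i).map π = (f (i + 1)).map π := by
    have hI : ∃ i < t, ¬ (I ⊓ f (i + 1) ≤ f i) := by
      by_contra hno
      push_neg at hno
      have key : ∀ j, j ≤ t → I ≤ f (t - j) := by
        intro j
        induction j with
        | zero => intro _; simpa [hft] using le_top
        | succ j ihj =>
          intro hj
          have h1 : I ≤ f (t - j) := ihj (by omega)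
          have h2 : t - j = (t - (j + 1)) + 1 := by omega
          have h3 : I ⊓ f ((t - (j + 1)) + 1) ≤ f (t - (j + 1)) := hno _ (by omega)
          rw [h2] at h1
          exact le_trans (le_inf le_rfl h1) h3
      have hkey := key t (le_refl t)
      rw [Nat.sub_self, hf0] at hkey
      exact hbot (le_bot_iff.mp hkey)
    obtain ⟨i, hi, hx⟩ := hI
    refine ⟨i, hi, ?_⟩
    have hlt : f i < f i ⊔ (I ⊓ f (i + 1)) := lt_of_le_of_ne le_sup_left
      (fun h => hx (le_trans le_sup_right h.symm.le))
    have hNle : f i ⊔ (I ⊓ f (i + 1)) ≤ f (i + 1) := sup_le (hfcov i hi).lt.le inf_le_right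
    have hNeq : f i ⊔ (I ⊓ f (i + 1)) = f (i + 1) := by
      by_contra hne
      exact (hfcov i hi).2 hlt (lt_of_le_of_ne hNle hne)
    have hmapker : (I ⊓ f (i + 1)).map π ≤ (f i).map π := by
      intro y hy
      obtain ⟨x, hx', rfl⟩ := NonUnitalSubalgebra.mem_map.mp hy
      have h0 : π x = 0 := (hker x).mpr hx'.1
      rw [h0]
      exact zero_mem _
    have hfinal : (f (i + 1)).map π = (f i).map π ⊔ (I ⊓ f (i + 1)).map π := by
      conv_lhs => rw [← hNeq]
      rw [NonUnitalAlgebra.map_sup]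
    rw [hfinal, sup_eq_left.mpr hmapker]
  -- deduplicate
  obtain ⟨s, F, hF0, hFs, hFcov, hst, hsne⟩ := dedup t (fun i => (f i).map π) hstep
  have hslt : s < t := by
    rcases Nat.lt_or_ge s t with h | h
    · exact h
    · obtain ⟨i, hi, heq⟩ := hcollapse
      exact absurd heq (hsne (by omega) i hi)
  have hQ : IsUnrefinableChain k Q s := ⟨F, hF0.trans hg0, hFs.trans hgt, hFcov⟩
  have hQle : algDepth k Q ≤ s := Nat.sInf_le hQ
  omega
end

section
/- Let A = M_n(D) be a matrix algebra over a division ring D and let B be a simple subalgebra of A isomorphic to M_t(Δ) for a division ring Δ. Then t ≤ n. -/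
open Matrix

/-- A nilpotent square matrix over a division ring satisfies `M ^ n = 0`. -/
lemma aux_nilpotent_pow_eq_zero {D : Type*} [DivisionRing D] {n : ℕ}
    {M : Matrix (Fin n) (Fin n) D} (h : IsNilpotent M) : M ^ n = 0 := by
  obtain ⟨N, hN⟩ := h
  let f : Module.End D (Fin n → D) := M.vecMulLinear
  have key : ∀ (m : ℕ) (v : Fin n → D), (f ^ m) v = v ᵥ* (M ^ m) := by
    intro m
    induction m with
    | zero => intro v; simp [Matrix.vecMul_one]
    | succ m ih =>
      intro v
      rw [pow_succ', Module.End.mul_apply, ih, pow_succ]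
      show (v ᵥ* M ^ m) ᵥ* M = v ᵥ* (M ^ m * M)
      rw [Matrix.vecMul_vecMul]
  have hfN : f ^ N = 0 := by
    ext v i
    simp [key, hN]
  have hker : LinearMap.ker (f ^ N) ≤ LinearMap.ker (f ^ (Module.finrank D (Fin n → D))) :=
    Module.End.ker_pow_le_ker_pow_finrank f N
  have hrank : Module.finrank D (Fin n → D) = n := by
    simp [Module.finrank_pi]
  rw [hrank, hfN] at hker
  have hfn : ∀ v : Fin n → D, v ᵥ* (M ^ n) = 0 := by
    intro v
    have hv : v ∈ LinearMap.ker (f ^ n) := hker (by simp)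
    have h2 := LinearMap.mem_ker.mp hv
    rwa [key] at h2
  ext i j
  have h3 := congr_fun (hfn (Pi.single i 1)) j
  rw [Matrix.single_one_vecMul] at h3
  simpa using h3


/-- The shift matrix and its powers. -/
lemma aux_shift_pow {Δ : Type*} [DivisionRing Δ] {t : ℕ} (m : ℕ) (i j : Fin t) :
    ((Matrix.of fun i j : Fin t => if (i : ℕ) + 1 = (j : ℕ) then (1 : Δ) else 0) ^ m) i j
      = if (i : ℕ) + m = (j : ℕ) then 1 else 0 := by
  induction m generalizing i j with
  | zero => simp [Matrix.one_apply, Fin.ext_iff]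
  | succ m ih =>
    rw [pow_succ, Matrix.mul_apply]
    simp only [ih, Matrix.of_apply]
    by_cases h : (i : ℕ) + m < t
    · rw [Finset.sum_eq_single (⟨(i : ℕ) + m, h⟩ : Fin t)]
      · simp [← add_assoc]
      · intro l _ hl
        rw [if_neg, zero_mul]
        intro hc
        exact hl (Fin.ext hc.symm)
      · simp
    · rw [Finset.sum_eq_zero, if_neg]
      · omega
      · intro l _
        rw [if_neg, zero_mul]
        omega

/-- Let `A = M_n(D)` be a matrix algebra over a (finite dimensional) division `k`-algebra `D`,
and let `B` be a subalgebra of `A` isomorphic (as a `k`-algebra) to `M_t(Δ)` for a division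
`k`-algebra `Δ`. Then `t ≤ n`. -/
theorem stmt10 (k D Δ : Type*) [Field k] [DivisionRing D] [Algebra k D]
    [FiniteDimensional k D] [DivisionRing Δ] [Algebra k Δ] [FiniteDimensional k Δ]
    (n t : ℕ)
    (B : NonUnitalSubalgebra k (Matrix (Fin n) (Fin n) D))
    (e : B ≃ₗ[k] Matrix (Fin t) (Fin t) Δ)
    (he : ∀ x y : B, e (x * y) = e x * e y) :
    t ≤ n := by
  by_contra hcon
  push_neg at hcon
  -- the shift matrix
  set N : Matrix (Fin t) (Fin t) Δ :=
    Matrix.of fun i j : Fin t => if (i : ℕ) + 1 = (j : ℕ) then (1 : Δ) else 0 with hNdef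
  have hNpow : ∀ (m : ℕ) (i j : Fin t), (N ^ m) i j = if (i : ℕ) + m = (j : ℕ) then 1 else 0 :=
    fun m i j => aux_shift_pow m i j
  rcases Nat.eq_zero_or_pos n with hn0 | hn0
  · -- n = 0 : the ambient matrix ring is trivial, but M_t(Δ) is not
    subst hn0
    have hsub : Subsingleton B := ⟨fun a b => Subtype.ext (Subsingleton.elim _ _)⟩
    have h1 : (1 : Matrix (Fin t) (Fin t) Δ) ≠ 0 := by
      intro hz
      have := congr_fun (congr_fun hz ⟨0, hcon⟩) ⟨0, hcon⟩
      simp [Matrix.one_apply] at this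
    have : (1 : Matrix (Fin t) (Fin t) Δ) = 0 := by
      calc (1 : Matrix (Fin t) (Fin t) Δ) = e (e.symm 1) := (e.apply_symm_apply 1).symm
        _ = e 0 := by rw [Subsingleton.elim (e.symm 1) 0]
        _ = 0 := e.map_zero
    exact h1 this
  · -- n ≥ 1
    set b0 : B := e.symm N with hb0
    set x : Matrix (Fin n) (Fin n) D := (b0 : Matrix (Fin n) (Fin n) D) with hx
    have chain : ∀ m : ℕ, ∃ b : B, (b : Matrix (Fin n) (Fin n) D) = x ^ (m + 1) ∧
        e b = N ^ (m + 1) := by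
      intro m
      induction m with
      | zero => exact ⟨b0, by rw [pow_one], by rw [hb0, e.apply_symm_apply, pow_one]⟩
      | succ m ih =>
        obtain ⟨b, hb1, hb2⟩ := ih
        refine ⟨b * b0, ?_, ?_⟩
        · show ((b : Matrix (Fin n) (Fin n) D) * (b0 : Matrix (Fin n) (Fin n) D)) = _
          rw [hb1, ← pow_succ]
        · rw [he, hb2, hb0, e.apply_symm_apply, ← pow_succ]
    -- x is nilpotent : x ^ t = 0
    obtain ⟨bt, hbt1, hbt2⟩ := chain (t - 1)
    have htt : t - 1 + 1 = t := by omega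
    rw [htt] at hbt1 hbt2
    have hNt : N ^ t = 0 := by
      ext i j
      rw [hNpow]
      have hj := j.isLt
      simp only [Matrix.zero_apply]
      rw [if_neg]
      omega
    have hbt0 : bt = 0 := by
      apply e.injective
      rw [hbt2, hNt, e.map_zero]
    have hxt : x ^ t = 0 := by
      rw [← hbt1, hbt0]
      rfl
    -- hence x ^ n = 0
    have hxn : x ^ n = 0 := aux_nilpotent_pow_eq_zero ⟨t, hxt⟩
    -- but the chain shows x ^ n ≠ 0
    obtain ⟨bn, hbn1, hbn2⟩ := chain (n - 1)
    have hnn : n - 1 + 1 = n := by omega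
    rw [hnn] at hbn1 hbn2
    have hbn0 : bn = 0 := Subtype.ext (by rw [hbn1, hxn]; rfl)
    have : N ^ n = 0 := by rw [← hbn2, hbn0, e.map_zero]
    have hne : (N ^ n) (⟨0, by omega⟩ : Fin t) (⟨n, hcon⟩ : Fin t) = 1 := by
      rw [hNpow]; simp
    rw [this] at hne
    simp at hne
end
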